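/- Let d, n ≥ 1 and M ≥ 0. There exists a constant C > 0, depending only on d, n and M, with the following property. Let W : ℝ^d → M_n(ℂ) be measurable with Frobenius norm |W(x)| ≤ M almost everywhere, and let K ∈ (0,1] be such that ( ∫_{ℝ^d} |W(x) u(x)|² dx )^{1/2} ≤ K ‖u‖_{H¹} for every continuously differentiable compactly supported u : ℝ^d → ℂⁿ. Then, setting η := K^{1/2}, one has η^{−d} ∫_{□_γ^η} |W(x)|² dx ≤ C K^{1/2} for every γ ∈ ℤ^d. -/

import Mathlib

/-!
Fix a bump `ψ` equal to `1` on the ball of radius `√d + 1` and let `φ(x) = ψ(η⁻¹(x - ηγ))`,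
which equals `1` on the cell `□_γ^η`. Testing the hypothesis on `uⱼ = φ eⱼ` and using
`∑ⱼ |W uⱼ|² = φ² |W|²` gives `∫_{□_γ^η} |W|² ≤ n K² ‖φ‖²_{H¹}`, and by scaling
`‖φ‖²_{H¹} = η^d ‖ψ‖²_{L²} + η^{d-2} ‖Dψ‖²_{L²}`. Since `K = η² ≤ 1`, the right-hand side is at
most `n η^{d+1} (‖ψ‖²_{L²} + ‖Dψ‖²_{L²})`.
-/

open MeasureTheory

noncomputable section

/-- `ℝ^d` with its Euclidean structure. -/
abbrev Ed (d : ℕ) := EuclideanSpace ℝ (Fin d)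

/-- `ℂⁿ` with its Euclidean (Hermitian) structure. -/
abbrev Cn (n : ℕ) := EuclideanSpace ℂ (Fin n)

/-- The cell `□_γ^η = η•γ + [0,η]^d` of the rescaled lattice `ηℤ^d`. -/
def cell (d : ℕ) (η : ℝ) (γ : Fin d → ℤ) : Set (Ed d) :=
  {x | ∀ i, η * γ i ≤ x i ∧ x i ≤ η * γ i + η}

/-- Frobenius norm of a complex `n × n` matrix. -/
def frob {n : ℕ} (A : Matrix (Fin n) (Fin n) ℂ) : ℝ :=
  Real.sqrt (∑ i, ∑ k, ‖A i k‖ ^ 2)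

/-- Action of a matrix on a vector of `ℂⁿ`. -/
def matAct {n : ℕ} (A : Matrix (Fin n) (Fin n) ℂ) (v : Cn n) : Cn n :=
  WithLp.toLp 2 (fun i => ∑ k, A i k * v k)

/-- The `H¹` norm `(∫|u|² + ∫‖Du‖²)^{1/2}`, `Du` the total derivative. -/
def hnorm {d n : ℕ} (u : Ed d → Cn n) : ℝ :=
  Real.sqrt ((∫ x, ‖u x‖ ^ 2) + ∫ x, ‖fderiv ℝ u x‖ ^ 2)

open Module

section Rescale

variable {E F : Type*} [NormedAddCommGroup E] [NormedSpace ℝ E] [NormedAddCommGroup F]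

def rescale (η : ℝ) (z : E) (f : E → F) : E → F := fun x => f (η⁻¹ • (x - z))

theorem HasCompactSupport.rescale {f : E → F} (hf : HasCompactSupport f) {η : ℝ} (hη : η ≠ 0)
    (z : E) : HasCompactSupport (rescale η z f) :=
  hf.comp_homeomorph ((Homeomorph.subRight z).trans (Homeomorph.smulOfNeZero η⁻¹ (inv_ne_zero hη)))

variable [NormedSpace ℝ F]

theorem contDiff_rescale {k : WithTop ℕ∞} {f : E → F} (hf : ContDiff ℝ k f) (η : ℝ) (z : E) :
    ContDiff ℝ k (rescale η z f) :=
  hf.comp ((contDiff_id.sub contDiff_const).const_smul η⁻¹)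

theorem fderiv_rescale {f : E → F} (hf : Differentiable ℝ f) (η : ℝ) (z x : E) :
    fderiv ℝ (rescale η z f) x = η⁻¹ • fderiv ℝ f (η⁻¹ • (x - z)) := by
  have hmap : HasFDerivAt (fun x : E => η⁻¹ • (x - z)) (η⁻¹ • ContinuousLinearMap.id ℝ E) x :=
    ((hasFDerivAt_id x).sub_const z).const_smul η⁻¹
  rw [show rescale η z f = f ∘ fun x => η⁻¹ • (x - z) from rfl, ((hf _).hasFDerivAt.comp x hmap).fderiv, ContinuousLinearMap.comp_smul,
    ContinuousLinearMap.comp_id]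

variable [FiniteDimensional ℝ E] [MeasurableSpace E] [BorelSpace E]
  (μ : Measure E) [μ.IsAddHaarMeasure]

theorem integral_rescale {η : ℝ} (hη : 0 ≤ η) (z : E) (f : E → F) :
    ∫ x, rescale η z f x ∂μ = η ^ finrank ℝ E • ∫ x, f x ∂μ := by
  rw [show (∫ x, rescale η z f x ∂μ) = ∫ x, f (η⁻¹ • (x - z)) ∂μ from rfl, integral_sub_right_eq_self (fun x => f (η⁻¹ • x)) z,
    Measure.integral_comp_inv_smul_of_nonneg μ f hη]

theorem integral_norm_fderiv_rescale_sq {f : E → ℝ} (hf : Differentiable ℝ f) {η : ℝ} (hη : 0 ≤ η)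
    (z : E) :
    ∫ x, ‖fderiv ℝ (rescale η z f) x‖ ^ 2 ∂μ
      = η⁻¹ ^ 2 * (η ^ finrank ℝ E * ∫ x, ‖fderiv ℝ f x‖ ^ 2 ∂μ) := by
  simp_rw [fderiv_rescale hf, norm_smul, mul_pow, Real.norm_of_nonneg (inv_nonneg.2 hη)]
  rw [integral_const_mul]
  exact congrArg _ (integral_rescale μ hη z fun y => ‖fderiv ℝ f y‖ ^ 2)

end Rescale

theorem measurableSet_cell (d : ℕ) (η : ℝ) (γ : Fin d → ℤ) : MeasurableSet (cell d η γ) := by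
  have : cell d η γ = ⋂ i, (fun x : Ed d => x i) ⁻¹' Set.Icc (η * γ i) (η * γ i + η) := by
    ext x; simp [cell]
  rw [this]
  exact MeasurableSet.iInter fun i =>
    (isClosed_Icc.preimage (EuclideanSpace.proj i).continuous).measurableSet

def cellCorner (d : ℕ) (η : ℝ) (γ : Fin d → ℤ) : Ed d := WithLp.toLp 2 fun i => η * γ i

theorem norm_inv_smul_sub_cellCorner_le {d : ℕ} {η : ℝ} (hη : 0 < η) {γ : Fin d → ℤ} {x : Ed d}
    (hx : x ∈ cell d η γ) : ‖η⁻¹ • (x - cellCorner d η γ)‖ ≤ √d := by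
  have hcoord : ∀ i, ‖(η⁻¹ • (x - cellCorner d η γ)) i‖ ^ 2 ≤ 1 := by
    intro i
    have hi : (η⁻¹ • (x - cellCorner d η γ)) i = (x i - η * γ i) / η := by
      simp [cellCorner, div_eq_inv_mul]
    rw [hi, Real.norm_eq_abs, sq_abs]
    obtain ⟨h₀, h₁⟩ := hx i
    exact pow_le_one₀ (div_nonneg (by linarith) hη.le) ((div_le_one hη).2 (by linarith))
  rw [EuclideanSpace.norm_eq]
  refine Real.sqrt_le_sqrt ((Finset.sum_le_sum fun i _ => hcoord i).trans ?_)
  simp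

section Matrix

variable {n : ℕ}

theorem frob_sq (A : Matrix (Fin n) (Fin n) ℂ) : frob A ^ 2 = ∑ i, ∑ k, ‖A i k‖ ^ 2 :=
  Real.sq_sqrt (by positivity)

theorem norm_matAct_smul_single_sq (A : Matrix (Fin n) (Fin n) ℂ) (r : ℝ) (j : Fin n) :
    ‖matAct A (r • EuclideanSpace.single j 1)‖ ^ 2 = r ^ 2 * ∑ i, ‖A i j‖ ^ 2 := by
  have hcoord : ∀ i, matAct A (r • EuclideanSpace.single j 1) i = r * A i j := fun i => by
    simp [matAct, Finset.sum_ite_eq', PiLp.single_apply, mul_comm]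
  simp [EuclideanSpace.norm_sq_eq, hcoord, Finset.mul_sum, mul_pow]

theorem sum_norm_matAct_smul_single_sq (A : Matrix (Fin n) (Fin n) ℂ) (r : ℝ) :
    ∑ j, ‖matAct A (r • EuclideanSpace.single j 1)‖ ^ 2 = r ^ 2 * frob A ^ 2 := by
  simp_rw [norm_matAct_smul_single_sq, ← Finset.mul_sum, frob_sq]
  rw [Finset.sum_comm]

end Matrix

theorem hnorm_smul_const_sq {d n : ℕ} {φ : Ed d → ℝ} (hφ : Differentiable ℝ φ) (v : Cn n) :
    hnorm (fun x => φ x • v) ^ 2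
      = ‖v‖ ^ 2 * ((∫ x, φ x ^ 2) + ∫ x, ‖fderiv ℝ φ x‖ ^ 2) := by
  have hderiv : ∀ x, fderiv ℝ (fun x => φ x • v) x = (fderiv ℝ φ x).smulRight v :=
    fun x => fderiv_smul_const (hφ x) v
  simp_rw [hnorm, hderiv, ContinuousLinearMap.norm_smulRight_apply, norm_smul, mul_pow,
    Real.norm_eq_abs, sq_abs, integral_mul_const]
  rw [Real.sq_sqrt (by positivity)]
  ring

section Localization

variable {d n : ℕ} {M : ℝ} {W : Ed d → Matrix (Fin n) (Fin n) ℂ}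

theorem integrable_norm_matAct_smul_single_sq (hW : ∀ p q, Measurable fun x => W x p q)
    (hWM : ∀ᵐ x, frob (W x) ≤ M) {φ : Ed d → ℝ} (hφ : Continuous φ) (hφs : HasCompactSupport φ)
    (j : Fin n) :
    Integrable fun x => ‖matAct (W x) (φ x • EuclideanSpace.single j 1)‖ ^ 2 := by
  have hφs2 : HasCompactSupport fun x => φ x ^ 2 := hφs.comp_left (zero_pow two_ne_zero)
  have hφ2 : Integrable fun x => M ^ 2 * φ x ^ 2 :=
    ((hφ.pow 2).integrable_of_hasCompactSupport hφs2).const_mul _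
  refine hφ2.mono' ?_ ?_
  · simp_rw [norm_matAct_smul_single_sq]
    exact ((hφ.measurable.pow_const 2).mul
      (Finset.measurable_sum _ fun i _ => (hW i j).norm.pow_const 2)).aestronglyMeasurable
  · filter_upwards [hWM] with x hx
    rw [Real.norm_of_nonneg (by positivity)]
    calc ‖matAct (W x) (φ x • EuclideanSpace.single j 1)‖ ^ 2
        ≤ ∑ j, ‖matAct (W x) (φ x • EuclideanSpace.single j 1)‖ ^ 2 :=
          Finset.single_le_sum (f := fun j => ‖matAct (W x) (φ x • EuclideanSpace.single j 1)‖ ^ 2)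
            (fun j _ => by positivity) (Finset.mem_univ j)
      _ = φ x ^ 2 * frob (W x) ^ 2 := sum_norm_matAct_smul_single_sq _ _
      _ ≤ M ^ 2 * φ x ^ 2 := by
          rw [mul_comm]
          gcongr
          exact Real.sqrt_nonneg _

theorem setIntegral_frob_sq_le (hW : ∀ p q, Measurable fun x => W x p q)
    (hWM : ∀ᵐ x, frob (W x) ≤ M) {K : ℝ}
    (hWK : ∀ u : Ed d → Cn n, ContDiff ℝ 1 u → HasCompactSupport u →
      Real.sqrt (∫ x, ‖matAct (W x) (u x)‖ ^ 2) ≤ K * hnorm u)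
    {φ : Ed d → ℝ} (hφ : ContDiff ℝ 1 φ) (hφs : HasCompactSupport φ)
    {S : Set (Ed d)} (hS : MeasurableSet S) (hφS : ∀ x ∈ S, φ x = 1) :
    ∫ x in S, frob (W x) ^ 2
      ≤ n * K ^ 2 * ((∫ x, φ x ^ 2) + ∫ x, ‖fderiv ℝ φ x‖ ^ 2) := by
  set u : Fin n → Ed d → Cn n := fun j x => φ x • EuclideanSpace.single j 1
  have hu : ∀ j, Integrable fun x => ‖matAct (W x) (u j x)‖ ^ 2 :=
    integrable_norm_matAct_smul_single_sq hW hWM hφ.continuous hφs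
  have htest : ∀ j, ∫ x, ‖matAct (W x) (u j x)‖ ^ 2 ≤ (K * hnorm (u j)) ^ 2 := fun j =>
    (Real.sqrt_le_iff.1 (hWK (u j) (hφ.smul contDiff_const)
      (hφs.smul_right (f' := fun _ => EuclideanSpace.single j 1)))).2
  calc ∫ x in S, frob (W x) ^ 2
      = ∫ x in S, ∑ j, ‖matAct (W x) (u j x)‖ ^ 2 := by
        refine setIntegral_congr_fun hS fun x hx => ?_
        rw [sum_norm_matAct_smul_single_sq, hφS x hx, one_pow, one_mul]
    _ ≤ ∫ x, ∑ j, ‖matAct (W x) (u j x)‖ ^ 2 :=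
        setIntegral_le_integral (integrable_finsetSum _ fun j _ => hu j)
          (.of_forall fun x => by positivity)
    _ = ∑ j, ∫ x, ‖matAct (W x) (u j x)‖ ^ 2 := integral_finsetSum _ fun j _ => hu j
    _ ≤ ∑ j : Fin n, (K * hnorm (u j)) ^ 2 := Finset.sum_le_sum fun j _ => htest j
    _ = n * K ^ 2 * ((∫ x, φ x ^ 2) + ∫ x, ‖fderiv ℝ φ x‖ ^ 2) := by
        simp [u, mul_pow, hnorm_smul_const_sq (hφ.differentiable one_ne_zero), mul_assoc]

end Localization

theorem stmt_9_general (d n : ℕ) (M : ℝ) :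
    ∃ C : ℝ, 0 < C ∧
      ∀ (W : Ed d → Matrix (Fin n) (Fin n) ℂ),
        (∀ p q, Measurable fun x => W x p q) →
        (∀ᵐ x, frob (W x) ≤ M) →
        ∀ K : ℝ, 0 < K → K ≤ 1 →
        (∀ u : Ed d → Cn n, ContDiff ℝ 1 u → HasCompactSupport u →
          Real.sqrt (∫ x, ‖matAct (W x) (u x)‖ ^ 2) ≤ K * hnorm u) →
        ∀ γ : Fin d → ℤ,
          ((Real.sqrt K) ^ d)⁻¹ *
              ∫ x in cell d (Real.sqrt K) γ, (frob (W x)) ^ 2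
            ≤ C * Real.sqrt K := by
  let ψ : ContDiffBump (0 : Ed d) := ⟨√d + 1, 2 * (√d + 1), by positivity, lt_two_mul_self (by positivity)⟩
  set A := ∫ x, ψ x ^ 2
  set B := ∫ x, ‖fderiv ℝ ψ x‖ ^ 2
  refine ⟨n * (A + B) + 1, by positivity, fun W hW hWM K hK₀ hK₁ hWK γ => ?_⟩
  set η := √K
  have hη₀ : 0 < η := Real.sqrt_pos.2 hK₀
  have hη₁ : η ≤ 1 := Real.sqrt_le_one.2 hK₁
  have hK : K = η ^ 2 := (Real.sq_sqrt hK₀.le).symm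
  set φ := rescale η (cellCorner d η γ) ψ
  have hφ : ∀ x ∈ cell d η γ, φ x = 1 := fun x hx =>
    ψ.one_of_mem_closedBall <| mem_closedBall_zero_iff.2 <|
      (norm_inv_smul_sub_cellCorner_le hη₀ hx).trans (le_add_of_nonneg_right zero_le_one)
  have hA : ∫ x, φ x ^ 2 = η ^ d * A :=
    (integral_rescale volume hη₀.le _ fun y => ψ y ^ 2).trans <| by
      rw [finrank_euclideanSpace_fin, smul_eq_mul]
  have hB : ∫ x, ‖fderiv ℝ φ x‖ ^ 2 = η⁻¹ ^ 2 * (η ^ d * B) := by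
    simpa using integral_norm_fderiv_rescale_sq volume (ψ.contDiff.differentiable one_ne_zero)
      hη₀.le (cellCorner d η γ)
  have hloc := setIntegral_frob_sq_le hW hWM hWK (contDiff_rescale ψ.contDiff _ _)
    (ψ.hasCompactSupport.rescale hη₀.ne' _) (measurableSet_cell d η γ) hφ
  rw [hA, hB, hK] at hloc
  rw [inv_mul_le_iff₀ (by positivity)]
  refine hloc.trans (le_of_eq_of_le (b := η ^ d * (n * (η ^ 4 * A + η ^ 2 * B))) ?_ ?_)
  · field_simp
  · have hA₀ : 0 ≤ A := integral_nonneg fun x => sq_nonneg _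
    have hB₀ : 0 ≤ B := integral_nonneg fun x => sq_nonneg _
    have h₄ : η ^ 4 ≤ η := pow_le_of_le_one hη₀.le hη₁ (by norm_num)
    have h₂ : η ^ 2 ≤ η := pow_le_of_le_one hη₀.le hη₁ (by norm_num)
    have hn : (0 : ℝ) ≤ n := n.cast_nonneg
    have : n * (η ^ 4 * A + η ^ 2 * B) ≤ (n * (A + B) + 1) * η := by
      nlinarith [mul_nonneg (mul_nonneg hn hA₀) (sub_nonneg.2 h₄),
        mul_nonneg (mul_nonneg hn hB₀) (sub_nonneg.2 h₂)]
    gcongr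

/-- Converse direction of Theorem 2.6 on `Ω = ℝ^d`: if
`‖Wu‖_{L²} ≤ K‖u‖_{H¹}` for all `C¹` compactly supported `u`, then with
`η := K^{1/2}` the cell-averaged `L²` norms `η^{-d}∫_{□_γ^η}|W|²` are bounded
by `C K^{1/2}` for every `γ ∈ ℤ^d`, with `C` depending only on `d`, `n`, `M`. -/
theorem stmt_9 (d n : ℕ) (hd : 1 ≤ d) (hn : 1 ≤ n) (M : ℝ) (hM : 0 ≤ M) :
    ∃ C : ℝ, 0 < C ∧
      ∀ (W : Ed d → Matrix (Fin n) (Fin n) ℂ),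
        (∀ p q, Measurable fun x => W x p q) →
        (∀ᵐ x, frob (W x) ≤ M) →
        ∀ K : ℝ, 0 < K → K ≤ 1 →
        (∀ u : Ed d → Cn n, ContDiff ℝ 1 u → HasCompactSupport u →
          Real.sqrt (∫ x, ‖matAct (W x) (u x)‖ ^ 2) ≤ K * hnorm u) →
        ∀ γ : Fin d → ℤ,
          ((Real.sqrt K) ^ d)⁻¹ *
              ∫ x in cell d (Real.sqrt K) γ, (frob (W x)) ^ 2
            ≤ C * Real.sqrt K :=
  stmt_9_general d n M

end
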